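/- arXiv:1108.2825 — 2 statements merged into one kernel-verified Lean document; each statement's English description precedes it below -/
import Mathlib

section
/- Let β ∈ (0,1), T > 0, and let φ : [0,T] → ℝ be continuous. If ∫₀^T (t + T - s)^{β-1} φ(s) ds = 0 for all t > 0, then φ ≡ 0 on [0,T]. -/
/-!
Differentiating `x ↦ ∫ₐᵇ (x - s) ^ γ * φ s ds` at `x > b` gives `γ` times the same integral with
exponent `γ - 1`; starting from `γ = β - 1 < 0` these factors never vanish, so all the integrals
with exponents `β - 1 - n` vanish.
At a fixed `x > b` these say that `u s = (x - s) ^ (β - 1) * φ s` is orthogonal to every power of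
`q s = (x - s)⁻¹`. Since `q` maps `[a, b]` homeomorphically onto an interval, polynomials in `q`
approximate `u` uniformly (Weierstrass), so `u` is orthogonal to itself and vanishes.
-/

open Set MeasureTheory Metric Polynomial
open scoped Interval

noncomputable def powKernelIntegral (φ : ℝ → ℝ) (a b γ x : ℝ) : ℝ :=
  ∫ s in a..b, (x - s) ^ γ * φ s

section

variable {φ : ℝ → ℝ} {a b x : ℝ}

theorem continuousOn_rpow_sub_mul (hφ : ContinuousOn φ (Icc a b)) (hx : b < x) (γ : ℝ) :
    ContinuousOn (fun s => (x - s) ^ γ * φ s) (Icc a b) :=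
  (continuousOn_const.sub continuousOn_id |>.rpow_const fun s hs =>
    Or.inl (by linarith [hs.2] : x - s ≠ 0)).mul hφ

theorem hasDerivAt_powKernelIntegral (hab : a ≤ b) (hφ : ContinuousOn φ (Icc a b)) (hx : b < x)
    (γ : ℝ) :
    HasDerivAt (powKernelIntegral φ a b γ) (γ * powKernelIntegral φ a b (γ - 1) x) x := by
  set δ := (x - b) / 2 with hδ_def
  have hδ : 0 < δ := by positivity
  have hgap : ∀ y ∈ closedBall x δ, ∀ s ∈ Icc a b, δ ≤ y - s := fun y hy s hs => by
    have := (abs_le.1 (mem_closedBall.1 hy)).1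
    linarith [hs.2, hδ_def]
  have hIoc : Ι a b ⊆ Icc a b := uIoc_of_le hab ▸ Ioc_subset_Icc_self
  obtain ⟨C, hC⟩ := (isCompact_closedBall x δ).prod isCompact_Icc |>.exists_bound_of_continuousOn
    (f := fun p : ℝ × ℝ => γ * ((p.1 - p.2) ^ (γ - 1) * φ p.2)) <| by
      refine continuousOn_const.mul (.mul ?_ (hφ.comp continuousOn_snd fun p hp => hp.2))
      exact (continuousOn_fst.sub continuousOn_snd).rpow_const fun p hp =>
        Or.inl (hδ.trans_le (hgap p.1 hp.1 p.2 hp.2)).ne'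
  have hleibniz := intervalIntegral.hasDerivAt_integral_of_dominated_loc_of_deriv_le
    (F := fun y s => (y - s) ^ γ * φ s) (F' := fun y s => γ * ((y - s) ^ (γ - 1) * φ s))
    (μ := volume) (bound := fun _ => C) (closedBall_mem_nhds x hδ)
    (Filter.mem_of_superset (Ioi_mem_nhds hx) fun y hy =>
      ((continuousOn_rpow_sub_mul hφ hy γ).intervalIntegrable_of_Icc hab).def'.aestronglyMeasurable)
    ((continuousOn_rpow_sub_mul hφ hx γ).intervalIntegrable_of_Icc hab)
    ((continuousOn_const.mul (continuousOn_rpow_sub_mul hφ hx (γ - 1))).intervalIntegrable_of_Icc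
      hab).def'.aestronglyMeasurable
    (Filter.Eventually.of_forall fun s hs y hy => hC (y, s) ⟨hy, hIoc hs⟩)
    intervalIntegrable_const
    (Filter.Eventually.of_forall fun s hs y hy => by
      have hpos : 0 < y - s := hδ.trans_le (hgap y hy s (hIoc hs))
      simpa [mul_assoc] using
        (((hasDerivAt_id y).sub_const s).rpow_const (p := γ) (Or.inl hpos.ne')).mul_const (φ s))
  rw [powKernelIntegral, ← intervalIntegral.integral_const_mul]
  exact hleibniz.2

theorem powKernelIntegral_sub_one_eq_zero (hab : a ≤ b) (hφ : ContinuousOn φ (Icc a b)) {γ : ℝ}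
    (hγ : γ ≠ 0) (h : ∀ x > b, powKernelIntegral φ a b γ x = 0) :
    ∀ x > b, powKernelIntegral φ a b (γ - 1) x = 0 := fun x hx => by
  have hzero : powKernelIntegral φ a b γ =ᶠ[nhds x] fun _ => 0 :=
    Filter.mem_of_superset (Ioi_mem_nhds hx) h
  have hderiv := (hasDerivAt_powKernelIntegral hab hφ hx γ).congr_of_eventuallyEq hzero.symm
  exact (mul_eq_zero.1 (hderiv.unique (hasDerivAt_const x 0))).resolve_left hγ

theorem powKernelIntegral_sub_natCast_eq_zero (hab : a ≤ b) (hφ : ContinuousOn φ (Icc a b))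
    {γ : ℝ} (hγ : ∀ k : ℕ, γ ≠ k) (h : ∀ x > b, powKernelIntegral φ a b γ x = 0) (n : ℕ) :
    ∀ x > b, powKernelIntegral φ a b (γ - n) x = 0 := by
  induction n with
  | zero => simpa using h
  | succ n ih =>
    rw [Nat.cast_succ, ← sub_sub]
    exact powKernelIntegral_sub_one_eq_zero hab hφ (sub_ne_zero.2 (hγ n)) ih

theorem eq_zero_of_forall_approx_orthogonal (hab : a < b) {u : ℝ → ℝ}
    (hu : ContinuousOn u (Icc a b))
    (happrox : ∀ ε > 0, ∃ g : ℝ → ℝ, IntervalIntegrable g volume a b ∧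
      (∀ s ∈ Icc a b, |g s - u s| ≤ ε) ∧ ∫ s in a..b, g s * u s = 0) :
    ∀ s ∈ Icc a b, u s = 0 := by
  intro s hs
  by_contra hne
  set I := ∫ s in a..b, u s * u s
  have hI : 0 < I := intervalIntegral.integral_pos hab (hu.mul hu)
    (fun _ _ => mul_self_nonneg _) ⟨s, hs, mul_self_pos.2 hne⟩
  obtain ⟨M, hM⟩ := isCompact_Icc.exists_bound_of_continuousOn hu
  have hM0 : 0 ≤ M := (norm_nonneg _).trans (hM s hs)
  have hba : 0 < b - a := sub_pos.2 hab
  set ε := I / ((M + 1) * (b - a)) with hε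
  obtain ⟨g, hg, hgu, horth⟩ := happrox ε (by positivity)
  have hu' : ContinuousOn u [[a, b]] := by rwa [uIcc_of_le hab.le]
  have hI_eq : I = ∫ s in a..b, (u s - g s) * u s := by
    simp only [sub_mul]
    rw [intervalIntegral.integral_sub (hu'.intervalIntegrable.mul_continuousOn hu')
      (hg.mul_continuousOn hu'), horth, sub_zero]
  have hle : ‖I‖ ≤ ε * M * |b - a| := by
    rw [hI_eq]
    refine intervalIntegral.norm_integral_le_of_norm_le_const fun t ht => ?_
    have ht' : t ∈ Icc a b := (uIoc_of_le hab.le ▸ Ioc_subset_Icc_self) ht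
    rw [norm_mul, Real.norm_eq_abs, abs_sub_comm]
    exact mul_le_mul (hgu t ht') (hM t ht') (norm_nonneg _) (by positivity)
  have hεM : ε * M * |b - a| = I * (M / (M + 1)) := by
    rw [abs_of_pos hba, hε]
    field_simp
  have hM1 : M / (M + 1) < 1 := (div_lt_one (by positivity)).2 (lt_add_one M)
  rw [Real.norm_eq_abs, abs_of_pos hI, hεM] at hle
  nlinarith

theorem integral_eval_mul_eq_zero_of_integral_pow_mul_eq_zero {q u : ℝ → ℝ}
    (hq : ContinuousOn q (uIcc a b)) (hu : ContinuousOn u (uIcc a b))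
    (h : ∀ n : ℕ, ∫ s in a..b, q s ^ n * u s = 0) (p : ℝ[X]) :
    ∫ s in a..b, p.eval (q s) * u s = 0 := by
  simp_rw [eval_eq_sum_range, Finset.sum_mul, mul_assoc]
  rw [intervalIntegral.integral_finsetSum (f := fun i s => p.coeff i * (q s ^ i * u s)) fun i _ =>
    (continuousOn_const.mul ((hq.pow i).mul hu)).intervalIntegrable]
  simp [intervalIntegral.integral_const_mul, h]

theorem exists_polynomial_near_comp_inv_sub (hab : a ≤ b) (hx : b < x) {u : ℝ → ℝ}
    (hu : ContinuousOn u (Icc a b)) {ε : ℝ} (hε : 0 < ε) :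
    ∃ p : ℝ[X], ∀ s ∈ Icc a b, |p.eval (x - s)⁻¹ - u s| < ε := by
  have hxb : 0 < x - b := sub_pos.2 hx
  have hxa : x - b ≤ x - a := by linarith
  have hmaps : MapsTo (fun v => x - v⁻¹) (Icc (x - a)⁻¹ (x - b)⁻¹) (Icc a b) := by
    intro v ⟨hv₁, hv₂⟩
    have hv : 0 < v := (inv_pos.2 (hxb.trans_le hxa)).trans_le hv₁
    have h₁ : v⁻¹ ≤ x - a := inv_inv (x - a) ▸ inv_anti₀ (inv_pos.2 (hxb.trans_le hxa)) hv₁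
    have h₂ : x - b ≤ v⁻¹ := inv_inv (x - b) ▸ inv_anti₀ hv hv₂
    constructor <;> simp only <;> linarith
  have hcont : ContinuousOn (fun v => u (x - v⁻¹)) (Icc (x - a)⁻¹ (x - b)⁻¹) :=
    hu.comp (continuousOn_const.sub (continuousOn_inv₀.mono fun v hv =>
      ((inv_pos.2 (hxb.trans_le hxa)).trans_le (hv : v ∈ Icc _ _).1).ne')) hmaps
  obtain ⟨p, hp⟩ := exists_polynomial_near_of_continuousOn _ _ _ hcont ε hε
  refine ⟨p, fun s hs => ?_⟩
  have hs' : 0 < x - s := by linarith [hs.2]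
  simpa using hp (x - s)⁻¹ ⟨inv_anti₀ hs' (by linarith [hs.1]), inv_anti₀ hxb (by linarith [hs.2])⟩

theorem eq_zero_of_integral_inv_sub_pow_mul_eq_zero (hab : a < b) (hx : b < x) {u : ℝ → ℝ}
    (hu : ContinuousOn u (Icc a b)) (h : ∀ n : ℕ, ∫ s in a..b, ((x - s)⁻¹) ^ n * u s = 0) :
    ∀ s ∈ Icc a b, u s = 0 := by
  have hq : ContinuousOn (fun s => (x - s)⁻¹) (Icc a b) :=
    (continuousOn_const.sub continuousOn_id : ContinuousOn (fun s => x - s) _).inv₀ fun s hs =>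
      (sub_pos.2 (hs.2.trans_lt hx)).ne'
  refine eq_zero_of_forall_approx_orthogonal hab hu fun ε hε => ?_
  obtain ⟨p, hp⟩ := exists_polynomial_near_comp_inv_sub hab.le hx hu hε
  refine ⟨fun s => p.eval (x - s)⁻¹, ?_, fun s hs => (hp s hs).le, ?_⟩
  · exact (p.continuous.comp_continuousOn hq).intervalIntegrable_of_Icc hab.le
  · rw [← uIcc_of_le hab.le] at hq hu
    exact integral_eval_mul_eq_zero_of_integral_pow_mul_eq_zero hq hu h p

theorem powKernelIntegral_sub_natCast (hab : a ≤ b) (hx : b < x) (γ : ℝ) (n : ℕ) :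
    powKernelIntegral φ a b (γ - n) x = ∫ s in a..b, ((x - s)⁻¹) ^ n * ((x - s) ^ γ * φ s) := by
  refine intervalIntegral.integral_congr fun s hs => ?_
  rw [uIcc_of_le hab] at hs
  have hs' : x - s ≠ 0 := (sub_pos.2 (hs.2.trans_lt hx)).ne'
  simp only [Real.rpow_sub_natCast hs', inv_pow]
  ring

theorem eq_zero_of_powKernelIntegral_sub_natCast_eq_zero (hab : a < b) (hx : b < x)
    (hφ : ContinuousOn φ (Icc a b)) {γ : ℝ} (h : ∀ n : ℕ, powKernelIntegral φ a b (γ - n) x = 0) :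
    ∀ s ∈ Icc a b, φ s = 0 := by
  have hu := eq_zero_of_integral_inv_sub_pow_mul_eq_zero hab hx (continuousOn_rpow_sub_mul hφ hx γ)
    fun n => powKernelIntegral_sub_natCast hab.le hx γ n ▸ h n
  intro s hs
  exact (mul_eq_zero.1 (hu s hs)).resolve_left (Real.rpow_pos_of_pos (by linarith [hs.2]) _).ne'

end

theorem vanishing_integral_implies_zero_general
    (β : ℝ) (hβ1 : β < 1)
    (T : ℝ) (hT : 0 < T) (φ : ℝ → ℝ)
    (hφ : ContinuousOn φ (Icc 0 T))
    (hvanish : ∀ t > (0:ℝ), ∫ s in (0:ℝ)..T, (t + T - s) ^ (β - 1) * φ s = 0) :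
    ∀ s ∈ Icc (0:ℝ) T, φ s = 0 := by
  have hkernel : ∀ x > T, powKernelIntegral φ 0 T (β - 1) x = 0 := fun x hx => by
    simpa [powKernelIntegral] using hvanish (x - T) (sub_pos.2 hx)
  have hnat : ∀ k : ℕ, β - 1 ≠ k := fun k => (by linarith [k.cast_nonneg (α := ℝ)] : β - 1 < k).ne
  exact eq_zero_of_powKernelIntegral_sub_natCast_eq_zero hT (lt_add_one T) hφ fun n =>
    powKernelIntegral_sub_natCast_eq_zero hT.le hφ hnat hkernel n (T + 1) (lt_add_one T)

theorem vanishing_integral_implies_zero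
    (β : ℝ) (hβ0 : 0 < β) (hβ1 : β < 1)
    (T : ℝ) (hT : 0 < T) (φ : ℝ → ℝ)
    (hφ : ContinuousOn φ (Icc 0 T))
    (hvanish : ∀ t > (0:ℝ), ∫ s in (0:ℝ)..T, (t + T - s) ^ (β - 1) * φ s = 0) :
    ∀ s ∈ Icc (0:ℝ) T, φ s = 0 :=
  vanishing_integral_implies_zero_general β hβ1 T hT φ hφ hvanish
end

section
/- Consider an autonomous fractional differential system C_D^{α_i} x_i(t) = f_i(x(t), x'(t), ..., x^(m)(t)), i = 1,...,p, with each α_i ∈ (0,∞) non-integer, n_i = ⌊α_i⌋+1, f : ℝ^{p(m+1)} → ℝ^p. Then this system has no non-constant periodic solution x of class C^{(n_1,...,n_p)} (with each n_i ≥ m). -/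
/-!
Fix a component `y = x i`, let `β = n - α ∈ (0, 1)` and `h = y⁽ⁿ⁾`, so that the Caputo derivative
of `y` is the Riemann–Liouville integral `I^β h`. Every derivative of `y` is `T`-periodic, hence so
is the right-hand side and with it `I^β h`. Splitting `I^β h (t + T)` at `T` and shifting the second
piece gives `∫₀ᵀ (r - s)^(β-1) h(s) ds = 0` for `r ∈ (T, 2T)`. Differentiating in `r` replaces the
exponent by `β - 1 - k` for every `k`, i.e. `(r₀ - s)^(β-1) h(s)` is orthogonal on `[0, T]` to all
polynomials in `(r₀ - s)⁻¹`, so by Stone–Weierstrass `h = 0`. Finally a periodic function whose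
`n`-th derivative vanishes is constant, because a periodic function with constant derivative has
derivative zero.
-/

open Set MeasureTheory intervalIntegral

lemma ContDiffOn.continuousOn_iteratedDeriv_of_isOpen {𝕜 F : Type*} [NontriviallyNormedField 𝕜]
    [NormedAddCommGroup F] [NormedSpace 𝕜 F] {f : 𝕜 → F} {s : Set 𝕜} {N : ℕ}
    (hf : ContDiffOn 𝕜 N f s) (hs : IsOpen s) : ContinuousOn (iteratedDeriv N f) s :=
  (hf.continuousOn_iteratedDerivWithin le_rfl hs.uniqueDiffOn).congr
    (iteratedDerivWithin_of_isOpen hs).symm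

section PeriodicOnIoi

variable {T : ℝ}

lemma apply_add_nat_mul_of_add_period {α : Type*} {f : ℝ → α} (hT : 0 ≤ T)
    (hf : ∀ t > 0, f (t + T) = f t) {s : ℝ} (hs : 0 < s) (k : ℕ) : f (s + k * T) = f s := by
  induction k with
  | zero => simp
  | succ k ih =>
    have hpos : 0 < s + k * T := add_pos_of_pos_of_nonneg hs (mul_nonneg k.cast_nonneg hT)
    rw [Nat.cast_succ, add_one_mul, ← add_assoc, hf _ hpos, ih]

lemma apply_add_int_mul_of_add_period {α : Type*} {f : ℝ → α} (hT : 0 ≤ T)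
    (hf : ∀ t > 0, f (t + T) = f t) {s : ℝ} (hs : 0 < s) {k : ℤ} (hsk : 0 < s + k * T) :
    f (s + k * T) = f s := by
  obtain ⟨j, rfl | rfl⟩ := k.eq_nat_or_neg
  · exact_mod_cast apply_add_nat_mul_of_add_period hT hf hs j
  · have h := apply_add_nat_mul_of_add_period hT hf hsk j
    simp only [Int.cast_neg, Int.cast_natCast, neg_mul, ← sub_eq_add_neg, sub_add_cancel] at h ⊢
    exact h.symm

lemma exists_mem_Ioc_apply_eq_of_add_period {α : Type*} {f : ℝ → α} (hT : 0 < T)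
    (hf : ∀ t > 0, f (t + T) = f t) {c : ℝ} (hc : 0 ≤ c) {s : ℝ} (hs : 0 < s) :
    ∃ s' ∈ Ioc c (c + T), f s = f s' := by
  have hmem := toIocMod_mem_Ioc hT c s
  refine ⟨toIocMod hT c s, hmem, ?_⟩
  have hs' : toIocMod hT c s = s + ((-toIocDiv hT c s : ℤ) : ℝ) * T := by
    rw [← self_sub_toIocDiv_zsmul, zsmul_eq_mul]; push_cast; ring
  rw [hs', apply_add_int_mul_of_add_period hT.le hf hs (hs' ▸ hc.trans_lt hmem.1)]

lemma exists_bound_of_continuousOn_of_add_period {E : Type*} [NormedAddCommGroup E]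
    {f : ℝ → E} (hT : 0 < T) (hf : ContinuousOn f (Ioi 0)) (hper : ∀ t > 0, f (t + T) = f t) :
    ∃ C, ∀ s > 0, ‖f s‖ ≤ C := by
  obtain ⟨C, hC⟩ := isCompact_Icc.exists_bound_of_continuousOn
    (hf.mono fun s (hs : s ∈ Icc T (T + T)) => hT.trans_le hs.1)
  refine ⟨C, fun s hs => ?_⟩
  obtain ⟨s', hs', hss'⟩ := exists_mem_Ioc_apply_eq_of_add_period hT hper hT.le hs
  exact hss' ▸ hC s' (Ioc_subset_Icc_self hs')

lemma iteratedDeriv_add_period {F : Type*} [NormedAddCommGroup F] [NormedSpace ℝ F] {f : ℝ → F}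
    (hf : ∀ t > 0, f (t + T) = f t) (k : ℕ) {t : ℝ} (ht : 0 < t) :
    iteratedDeriv k f (t + T) = iteratedDeriv k f t := by
  rw [← congrFun (iteratedDeriv_comp_add_const k f T) t]
  exact Filter.EventuallyEq.iteratedDeriv_eq k <|
    Filter.eventually_of_mem (isOpen_Ioi.mem_nhds ht) fun s hs => hf s hs

lemma eq_zero_of_hasDerivAt_of_add_period {y : ℝ → ℝ} {c : ℝ} (hT : 0 < T)
    (hy : ∀ t > 0, HasDerivAt y c t) (hper : ∀ t > 0, y (t + T) = y t) : c = 0 := by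
  obtain ⟨ξ, -, hξ⟩ := exists_hasDerivAt_eq_slope y (fun _ => c) (lt_add_of_pos_right T hT)
    (fun t ht => (hy t (hT.trans_le ht.1)).continuousAt.continuousWithinAt)
    (fun t ht => hy t (hT.trans ht.1))
  rwa [hper T hT, sub_self, zero_div] at hξ

theorem eq_of_iteratedDeriv_eq_zero_of_add_period (hT : 0 < T) :
    ∀ (N : ℕ) {y : ℝ → ℝ}, ContDiffOn ℝ N y (Ioi 0) → (∀ t > 0, y (t + T) = y t) →
      (∀ t > 0, iteratedDeriv N y t = 0) → ∀ a > 0, ∀ b > 0, y a = y b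
  | 0, y, _, _, hy, a, ha, b, hb => by simp_all
  | N + 1, y, hC, hper, hy, a, ha, b, hb => by
    have hdiff : DifferentiableOn ℝ y (Ioi 0) := hC.differentiableOn (by simp)
    have hderiv : ∀ t > 0, HasDerivAt y (deriv y t) t := fun t ht =>
      ((hdiff t ht).differentiableAt (isOpen_Ioi.mem_nhds ht)).hasDerivAt
    have hconst := eq_of_iteratedDeriv_eq_zero_of_add_period hT N
      (hC.deriv_of_isOpen isOpen_Ioi (by simp))
      (fun t ht => by simpa using iteratedDeriv_add_period hper 1 ht)
      (fun t ht => by rw [← iteratedDeriv_succ', hy t ht])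
    have hzero : deriv y T = 0 := eq_zero_of_hasDerivAt_of_add_period hT
      (fun t ht => hconst t ht T hT ▸ hderiv t ht) hper
    exact isOpen_Ioi.is_const_of_deriv_eq_zero isPreconnected_Ioi hdiff
      (fun t ht => (hconst t ht T hT).trans hzero) ha hb

end PeriodicOnIoi

section Moments

variable {a b : ℝ}

lemma eqOn_zero_of_integral_pow_mul_eq_zero {φ G : ℝ → ℝ} (hab : a < b)
    (hφ : ContinuousOn φ (Icc a b)) (hφinj : InjOn φ (Icc a b)) (hG : ContinuousOn G (Icc a b))
    (hmom : ∀ k : ℕ, ∫ s in a..b, φ s ^ k * G s = 0) : EqOn G 0 (Icc a b) := by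
  -- By Stone–Weierstrass the polynomials in `φ` are dense in `C([a, b])`, so `G` is orthogonal
  -- to itself.
  let π : ℝ → Icc a b := projIcc a b hab.le
  let Φ : C(Icc a b, ℝ) := ⟨fun z => φ z, continuousOn_iff_continuous_domRestrict.1 hφ⟩
  let Γ : C(Icc a b, ℝ) := ⟨fun z => G z, continuousOn_iff_continuous_domRestrict.1 hG⟩
  have hΦ (s : ℝ) (hs : s ∈ Icc a b) : Φ (π s) = φ s := by
    simp only [π, projIcc_of_mem hab.le hs]; rfl
  have hΓ (s : ℝ) (hs : s ∈ Icc a b) : Γ (π s) = G s := by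
    simp only [π, projIcc_of_mem hab.le hs]; rfl
  have hint (F : C(Icc a b, ℝ)) : IntervalIntegrable (fun s => F (π s) * Γ (π s)) volume a b :=
    (by fun_prop : Continuous fun s => F (π s) * Γ (π s)).intervalIntegrable a b
  let L : C(Icc a b, ℝ) →ₗ[ℝ] ℝ :=
    { toFun := fun F => ∫ s in a..b, F (π s) * Γ (π s)
      map_add' := fun F F' => by
        simp only [ContinuousMap.add_apply, add_mul]
        exact integral_add (hint F) (hint F')
      map_smul' := fun c F => by
        simp only [ContinuousMap.smul_apply, smul_eq_mul, mul_assoc,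
          intervalIntegral.integral_const_mul, RingHom.id_apply] }
  have hLcont : Continuous L :=
    continuous_parametric_intervalIntegral_of_continuous' (by fun_prop) a b
  have hLpow (k : ℕ) : L (Φ ^ k) = 0 := by
    refine (integral_congr fun s hs => ?_).trans (hmom k)
    rw [uIcc_of_le hab.le] at hs
    simp only [ContinuousMap.pow_apply, hΦ s hs, hΓ s hs]
  have hLadjoin : (Algebra.adjoin ℝ {Φ} : Set C(Icc a b, ℝ)) ⊆ L ⁻¹' {0} := by
    rw [Algebra.adjoin_singleton_eq_range_aeval]
    rintro _ ⟨q, rfl⟩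
    simp [Polynomial.aeval_eq_sum_range, hLpow]
  have hsep : (Algebra.adjoin ℝ {Φ}).SeparatesPoints := fun z w hzw =>
    ⟨Φ, ⟨Φ, Algebra.subset_adjoin rfl, rfl⟩, fun h => hzw (Subtype.ext (hφinj z.2 w.2 h))⟩
  have hLΓ : L Γ = 0 := by
    have hΓmem : Γ ∈ closure (Algebra.adjoin ℝ {Φ} : Set C(Icc a b, ℝ)) := by
      rw [← Subalgebra.topologicalClosure_coe,
        ContinuousMap.subalgebra_topologicalClosure_eq_top_of_separatesPoints _ hsep]
      trivial
    exact closure_minimal hLadjoin (isClosed_singleton.preimage hLcont) hΓmem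
  intro c hc
  by_contra hne
  refine (integral_lt_integral_of_continuousOn_of_le_of_exists_lt hab continuousOn_const
    (by fun_prop : Continuous fun s => Γ (π s) * Γ (π s)).continuousOn
    (fun _ _ => mul_self_nonneg _) ⟨c, hc, ?_⟩).ne' ?_
  · simpa [hΓ c hc] using hne
  · rw [intervalIntegral.integral_zero]
    exact hLΓ

variable {g : ℝ → ℝ}

lemma continuousOn_sub_rpow_mul {r γ : ℝ} (hg : ContinuousOn g (Icc a b)) (hr : b < r) :
    ContinuousOn (fun s => (r - s) ^ γ * g s) (Icc a b) :=
  ((continuousOn_const.sub continuousOn_id).rpow_const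
    fun _ hs => Or.inl (sub_pos.2 (hs.2.trans_lt hr)).ne').mul hg

lemma hasDerivAt_integral_sub_rpow_mul (hab : a ≤ b) (hg : ContinuousOn g (Icc a b))
    {r γ : ℝ} (hr : b < r) :
    HasDerivAt (fun ρ => ∫ s in a..b, (ρ - s) ^ γ * g s)
      (γ * ∫ s in a..b, (r - s) ^ (γ - 1) * g s) r := by
  set ε := (r - b) / 2
  have hε : 0 < ε := by simp only [ε]; linarith
  have hpos : ∀ ρ ∈ Metric.closedBall r ε, ∀ s ∈ Icc a b, 0 < ρ - s := fun ρ hρ s hs => by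
    rw [Metric.mem_closedBall, Real.dist_eq, abs_le] at hρ
    simp only [ε] at hρ
    linarith [hs.2]
  obtain ⟨C, hC⟩ := ((isCompact_closedBall r ε).prod isCompact_Icc).exists_bound_of_continuousOn
    (f := fun q : ℝ × ℝ => γ * (q.1 - q.2) ^ (γ - 1) * g q.2) <|
    (continuousOn_const.mul ((continuous_fst.sub continuous_snd).continuousOn.rpow_const
      fun q hq => Or.inl (hpos q.1 hq.1 q.2 hq.2).ne')).mul (hg.comp continuousOn_snd
      fun q hq => hq.2)
  have huIoc : uIoc a b ⊆ Icc a b := uIoc_of_le hab ▸ Ioc_subset_Icc_self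
  have hF' : ContinuousOn (fun s => γ * (r - s) ^ (γ - 1) * g s) (Icc a b) := by
    simp_rw [mul_assoc]
    exact continuousOn_const.mul (continuousOn_sub_rpow_mul hg hr)
  have hball : Metric.ball r ε ⊆ Metric.closedBall r ε := Metric.ball_subset_closedBall
  have hd := hasDerivAt_integral_of_dominated_loc_of_deriv_le (μ := volume) (bound := fun _ => C)
    (F := fun ρ s => (ρ - s) ^ γ * g s) (F' := fun ρ s => γ * (ρ - s) ^ (γ - 1) * g s)
    (Metric.ball_mem_nhds r hε)
    (Filter.eventually_of_mem (Metric.ball_mem_nhds r hε) fun ρ hρ =>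
      ((continuousOn_sub_rpow_mul hg (by linarith [hpos ρ (hball hρ) b ⟨hab, le_rfl⟩])).mono
        huIoc).aestronglyMeasurable measurableSet_uIoc)
    ((continuousOn_sub_rpow_mul hg hr).intervalIntegrable_of_Icc hab)
    ((hF'.mono huIoc).aestronglyMeasurable measurableSet_uIoc)
    (ae_of_all _ fun s hs ρ hρ => hC (ρ, s) ⟨hball hρ, huIoc hs⟩) intervalIntegrable_const
    (ae_of_all _ fun s hs ρ hρ => by
      simpa using (((hasDerivAt_id ρ).sub_const s).rpow_const
        (Or.inl (hpos ρ (hball hρ) s (huIoc hs)).ne')).mul_const (g s))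
  rw [← intervalIntegral.integral_const_mul]
  simpa only [mul_assoc] using hd.2

lemma integral_sub_rpow_sub_nat_mul_eq_zero {c γ : ℝ} (hab : a ≤ b)
    (hγ : ∀ k : ℕ, γ ≠ k) (hg : ContinuousOn g (Icc a b))
    (h : ∀ r ∈ Ioo b c, ∫ s in a..b, (r - s) ^ γ * g s = 0) (k : ℕ) :
    ∀ r ∈ Ioo b c, ∫ s in a..b, (r - s) ^ (γ - k) * g s = 0 := by
  induction k with
  | zero => simpa using h
  | succ k ih =>
    intro r hr
    have hzero : HasDerivAt (fun ρ => ∫ s in a..b, (ρ - s) ^ (γ - k) * g s) 0 r :=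
      (hasDerivAt_const r 0).congr_of_eventuallyEq <|
        Filter.eventually_of_mem (isOpen_Ioo.mem_nhds hr) ih
    have hprod := (hasDerivAt_integral_sub_rpow_mul hab hg hr.1).unique hzero
    rw [sub_sub, ← Nat.cast_succ] at hprod
    exact (mul_eq_zero.1 hprod).resolve_left (sub_ne_zero.2 (hγ k))

theorem eqOn_zero_of_integral_sub_rpow_mul_eq_zero {c γ : ℝ} (hab : a < b)
    (hbc : b < c) (hγ : ∀ k : ℕ, γ ≠ k) (hg : ContinuousOn g (Icc a b))
    (h : ∀ r ∈ Ioo b c, ∫ s in a..b, (r - s) ^ γ * g s = 0) : EqOn g 0 (Icc a b) := by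
  set r := (b + c) / 2
  have hr : r ∈ Ioo b c := ⟨by simp only [r]; linarith, by simp only [r]; linarith⟩
  have hpos : ∀ s ∈ Icc a b, 0 < r - s := fun s hs => by linarith [hs.2, hr.1]
  have hG := eqOn_zero_of_integral_pow_mul_eq_zero hab (φ := fun s => (r - s)⁻¹)
    (G := fun s => (r - s) ^ γ * g s)
    ((continuousOn_const.sub continuousOn_id).inv₀ fun s hs => (hpos s hs).ne')
    (fun s hs t ht hst => by linarith [inv_injective hst])
    (continuousOn_sub_rpow_mul hg hr.1)
    (fun k => by
      refine (integral_congr fun s hs => ?_).trans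
        (integral_sub_rpow_sub_nat_mul_eq_zero hab.le hγ hg h k r hr)
      rw [uIcc_of_le hab.le] at hs
      simp only [Real.rpow_sub_natCast (hpos s hs).ne', inv_pow]
      ring)
  intro s hs
  exact (mul_eq_zero.1 (hG hs)).resolve_left (Real.rpow_pos_of_pos (hpos s hs) γ).ne'

end Moments

/-- The Riemann–Liouville fractional integral `I^β h (t)` based at `0`. The Caputo derivative of
order `α` is `riemannLiouvilleIntegral (n - α) (iteratedDeriv n x)` with `n = ⌊α⌋₊ + 1`. -/
noncomputable def riemannLiouvilleIntegral (β : ℝ) (h : ℝ → ℝ) (t : ℝ) : ℝ :=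
  1 / Real.Gamma β * ∫ s in (0 : ℝ)..t, (t - s) ^ (β - 1) * h s

lemma intervalIntegrable_sub_rpow_mul {h : ℝ → ℝ} {a t β C : ℝ} (hβ : 0 < β) (hat : a ≤ t)
    (hh : AEStronglyMeasurable h (volume.restrict (Ioc a t))) (hC : ∀ s ∈ Ioc a t, ‖h s‖ ≤ C) :
    IntervalIntegrable (fun s => (t - s) ^ (β - 1) * h s) volume a t := by
  have hker : IntervalIntegrable (fun s => (t - s) ^ (β - 1)) volume a t := by
    simpa using ((intervalIntegral.intervalIntegrable_rpow' (by linarith : -1 < β - 1)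
      (a := 0) (b := t - a)).comp_sub_left t).symm
  rw [intervalIntegrable_iff_integrableOn_Ioc_of_le hat] at hker ⊢
  exact hker.mul_bdd hh ((ae_restrict_iff' measurableSet_Ioc).2 (ae_of_all _ hC))

lemma integral_sub_rpow_mul_add_period_eq_zero {h : ℝ → ℝ} {β T t : ℝ} (hβ : 0 < β)
    (hT : 0 < T) (ht : 0 < t) (hh : ContinuousOn h (Ioi 0)) (hper : ∀ s > 0, h (s + T) = h s)
    (hI : ∫ s in (0 : ℝ)..t + T, (t + T - s) ^ (β - 1) * h s
      = ∫ s in (0 : ℝ)..t, (t - s) ^ (β - 1) * h s) :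
    ∫ s in (0 : ℝ)..T, (t + T - s) ^ (β - 1) * h (s + T) = 0 := by
  obtain ⟨C, hC⟩ := exists_bound_of_continuousOn_of_add_period hT hh hper
  have hint := intervalIntegrable_sub_rpow_mul hβ (by linarith : (0 : ℝ) ≤ t + T)
    ((hh.mono Ioc_subset_Ioi_self).aestronglyMeasurable measurableSet_Ioc)
    (fun s hs => hC s hs.1)
  have hcongr {v : ℝ} (hv : 0 ≤ v) {F G : ℝ → ℝ} (hFG : ∀ s > 0, F s = G s) :
      ∫ s in (0 : ℝ)..v, F s = ∫ s in (0 : ℝ)..v, G s :=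
    integral_congr_ae (ae_of_all _ fun s hs => hFG s (uIoc_of_le hv ▸ hs).1)
  have hTmem : T ∈ uIcc 0 (t + T) := by
    rw [uIcc_of_le (by linarith)]
    exact ⟨hT.le, by linarith⟩
  have hsplit := integral_add_adjacent_intervals (hint.mono_set (uIcc_subset_uIcc_left hTmem))
    (hint.mono_set (uIcc_subset_uIcc_right hTmem))
  have hshift : ∫ s in T..t + T, (t + T - s) ^ (β - 1) * h s
      = ∫ s in (0 : ℝ)..t, (t - s) ^ (β - 1) * h s := by
    have hsub := integral_comp_add_right (a := 0) (b := t) (fun s => (t + T - s) ^ (β - 1) * h s) T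
    rw [zero_add] at hsub
    rw [← hsub]
    exact hcongr ht.le fun s hs => by rw [add_sub_add_right_eq_sub, hper s hs]
  rw [hcongr hT.le fun s hs => by rw [hper s hs]]
  linarith

theorem eqOn_zero_of_riemannLiouvilleIntegral_add_period {h : ℝ → ℝ} {β T : ℝ}
    (hβ : β ∈ Ioo 0 1) (hT : 0 < T) (hh : ContinuousOn h (Ioi 0))
    (hper : ∀ t > 0, h (t + T) = h t)
    (hI : ∀ t ∈ Ioo 0 T, riemannLiouvilleIntegral β h (t + T) = riemannLiouvilleIntegral β h t) :
    EqOn h 0 (Ioi 0) := by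
  have hshift : EqOn (fun s => h (s + T)) 0 (Icc 0 T) := by
    refine eqOn_zero_of_integral_sub_rpow_mul_eq_zero hT (lt_add_of_pos_right T hT)
      (fun k => (by linarith [hβ.2, k.cast_nonneg (α := ℝ)] : β - 1 < k).ne)
      (hh.comp (continuous_add_const T).continuousOn fun s hs => by
        simp only [mem_Ioi]; linarith [hs.1])
      fun r hr => ?_
    have hrT : r - T ∈ Ioo 0 T := ⟨by linarith [hr.1], by linarith [hr.2]⟩
    simpa using integral_sub_rpow_mul_add_period_eq_zero hβ.1 hT hrT.1 hh hper
      (mul_left_cancel₀ (one_div_pos.2 (Real.Gamma_pos_of_pos hβ.1)).ne' (hI _ hrT))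
  intro s hs
  obtain ⟨s', hs', hss'⟩ := exists_mem_Ioc_apply_eq_of_add_period hT hper le_rfl hs
  rw [hss', ← hper s' hs'.1]
  exact hshift ⟨hs'.1.le, by simpa using hs'.2⟩

lemma Nat.floor_add_one_sub_mem_Ioo {α : ℝ} (hα : 0 ≤ α) (hαnat : ∀ k : ℕ, α ≠ k) :
    (⌊α⌋₊ + 1 : ℝ) - α ∈ Ioo 0 1 :=
  ⟨sub_pos.2 (Nat.lt_floor_add_one α),
    by linarith [(Nat.floor_le hα).lt_of_ne (hαnat _).symm]⟩

theorem autonomous_fractional_system_no_periodic_solution_general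
    (p m : ℕ) (α : Fin p → ℝ)
    (hα : ∀ i, 0 < α i) (hαnotint : ∀ i, ∀ k : ℕ, α i ≠ k)
    (n : Fin p → ℕ) (hn : ∀ i, n i = ⌊α i⌋₊ + 1)
    (f : (Fin (m + 1) → Fin p → ℝ) → Fin p → ℝ)
    (x : ℝ → Fin p → ℝ)
    (hC : ∀ i, ContDiffOn ℝ (n i) (fun t => x t i) (Ioi 0))
    (hsol : ∀ t > (0:ℝ), ∀ i,
      (1 / Real.Gamma (n i - α i)) *
          ∫ s in (0:ℝ)..t,
            (t - s) ^ ((n i : ℝ) - α i - 1) * iteratedDeriv (n i) (fun u => x u i) s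
        = f (fun j i' => iteratedDeriv (j : ℕ) (fun u => x u i') t) i)
    (T : ℝ) (hT : 0 < T)
    (hper : ∀ t > (0:ℝ), x (t + T) = x t) :
    ∃ c : Fin p → ℝ, ∀ t > (0:ℝ), x t = c := by
  have hxper (i : Fin p) : ∀ t > 0, x (t + T) i = x t i := fun t ht => congrFun (hper t ht) i
  refine ⟨x T, fun t ht => funext fun i => ?_⟩
  have hβ : (n i : ℝ) - α i ∈ Ioo 0 1 := by
    rw [hn i]
    exact_mod_cast Nat.floor_add_one_sub_mem_Ioo (hα i).le (hαnotint i)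
  have hI : ∀ t ∈ Ioo 0 T, riemannLiouvilleIntegral (n i - α i)
      (iteratedDeriv (n i) fun u => x u i) (t + T)
      = riemannLiouvilleIntegral (n i - α i) (iteratedDeriv (n i) fun u => x u i) t :=
    fun t ht => by
      unfold riemannLiouvilleIntegral
      rw [hsol (t + T) (by linarith [ht.1]) i, hsol t ht.1 i]
      congr 1
      funext j i'
      exact iteratedDeriv_add_period (hxper i') j ht.1
  have hzero := eqOn_zero_of_riemannLiouvilleIntegral_add_period hβ hT
    ((hC i).continuousOn_iteratedDeriv_of_isOpen isOpen_Ioi)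
    (fun t ht => iteratedDeriv_add_period (hxper i) (n i) ht) hI
  exact eq_of_iteratedDeriv_eq_zero_of_add_period hT (n i) (hC i) (hxper i) hzero t ht T hT

theorem autonomous_fractional_system_no_periodic_solution
    (p m : ℕ) (α : Fin p → ℝ)
    (hα : ∀ i, 0 < α i) (hαnotint : ∀ i, ∀ k : ℕ, α i ≠ k)
    (n : Fin p → ℕ) (hn : ∀ i, n i = ⌊α i⌋₊ + 1) (hnm : ∀ i, m ≤ n i)
    (f : (Fin (m + 1) → Fin p → ℝ) → Fin p → ℝ)
    (x : ℝ → Fin p → ℝ)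
    (hC : ∀ i, ContDiffOn ℝ (n i) (fun t => x t i) (Ioi 0))
    (hsol : ∀ t > (0:ℝ), ∀ i,
      (1 / Real.Gamma (n i - α i)) *
          ∫ s in (0:ℝ)..t,
            (t - s) ^ ((n i : ℝ) - α i - 1) * iteratedDeriv (n i) (fun u => x u i) s
        = f (fun j i' => iteratedDeriv (j : ℕ) (fun u => x u i') t) i)
    (T : ℝ) (hT : 0 < T)
    (hper : ∀ t > (0:ℝ), x (t + T) = x t) :
    ∃ c : Fin p → ℝ, ∀ t > (0:ℝ), x t = c :=
  autonomous_fractional_system_no_periodic_solution_general p m α hα hαnotint n hn f x hC hsol T hT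
    hper
end
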